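/- arXiv:2506.06937 — 2 statements merged into one kernel-verified Lean document; each statement's English description precedes it below -/
import Mathlib

section
/- If a sequence of points {x_k} lies in a compact set and each x_k belongs to a finite set M_k (the mesh intersected with the compact domain), and furthermore the categorical components take values in a finite set, the number-of-neighbors parameters take values in a finite set, and the mesh size vectors satisfy liminf ‖δ_k‖² = n^int along unsuccessful iterations, then there exists an infinite subsequence K of unsuccessful iteration indices such that x_k → x* for some x*, ‖δ_k‖² → n^int, m_k → m*, and the neighborhoods N(x_k^cat; m_k) are eventually constant equal to N(x*^cat; m*) along K. -/
/-- Existence of a refining subsequence (zeroth-order result).  If the iterates lie in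
a compact set, the categorical components take values in a finite set, the
number-of-neighbors parameters are bounded, and the mesh-size norms come within any
`ε` of `n^int` infinitely often along unsuccessful iterations (liminf condition),
then there is an infinite subsequence of unsuccessful iterations along which the
iterates converge, the mesh-size norms tend to `n^int`, and the categorical
component, the neighbor number, and the induced neighborhoods are eventually
constant. -/
theorem exists_refining_subsequence
    {E : Type*} [MetricSpace E] {C : Type*} [Fintype C]
    (U : Set ℕ) (hU : U.Infinite)
    (x : ℕ → E) (S : Set E) (hS : IsCompact S) (hxS : ∀ k, x k ∈ S)
    (xc : ℕ → C)
    (mseq : ℕ → ℕ) (M : ℕ) (hm : ∀ k, mseq k ≤ M)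
    (d : ℕ → ℝ) (nint : ℝ)
    (hd : ∀ ε : ℝ, 0 < ε → {k ∈ U | |d k - nint| < ε}.Infinite)
    (N : C → ℕ → Set C) :
    ∃ φ : ℕ → ℕ, StrictMono φ ∧ (∀ k, φ k ∈ U) ∧
      ∃ xstar ∈ S, Filter.Tendsto (fun k => x (φ k)) Filter.atTop (nhds xstar) ∧
      Filter.Tendsto (fun k => d (φ k)) Filter.atTop (nhds nint) ∧
      ∃ cstar : C, ∃ mstar : ℕ,
        (∀ k, xc (φ k) = cstar) ∧ (∀ k, mseq (φ k) = mstar) ∧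
        (∀ k, N (xc (φ k)) (mseq (φ k)) = N cstar mstar) := by
  classical
  set A : ℕ → Set ℕ := fun n => {k ∈ U | |d k - nint| < 1 / (n + 1)} with hA
  have hAinf : ∀ n, (A n).Infinite := fun n => hd _ (by positivity)
  have H : ∀ n m : ℕ, ∃ k, m < k ∧ k ∈ A n := by
    intro n m
    obtain ⟨k, hk, hmk⟩ := (hAinf n).exists_gt m
    exact ⟨k, hmk, hk⟩
  choose g hg1 hg2 using H
  let ψ : ℕ → ℕ := fun n => Nat.rec (g 0 0) (fun n ih => g (n + 1) ih) n
  have hψmono : StrictMono ψ := strictMono_nat_of_lt_succ fun n => hg1 (n + 1) (ψ n)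
  have hψA : ∀ n, ψ n ∈ A n := by
    intro n
    cases n with
    | zero => exact hg2 0 0
    | succ n => exact hg2 (n + 1) (ψ n)
  have hψU : ∀ n, ψ n ∈ U := fun n => (hψA n).1
  -- tendsto of d along ψ
  have hdψ : Filter.Tendsto (fun n => d (ψ n)) Filter.atTop (nhds nint) := by
    rw [tendsto_iff_dist_tendsto_zero]
    refine squeeze_zero (fun n => dist_nonneg) (fun n => ?_)
      tendsto_one_div_add_atTop_nhds_zero_nat
    rw [Real.dist_eq]
    exact le_of_lt (hψA n).2
  -- pigeonhole on (xc, mseq)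
  let F : ℕ → C × Fin (M + 1) := fun n =>
    (xc (ψ n), ⟨mseq (ψ n), Nat.lt_succ_of_le (hm _)⟩)
  obtain ⟨y, hy⟩ := Finite.exists_infinite_fiber F
  have hyinf : {n | F n = y}.Infinite := by
    rw [← Set.infinite_coe_iff]
    exact hy
  let e : ℕ → ℕ := Nat.nth (fun n => F n = y)
  have hemono : StrictMono e := Nat.nth_strictMono hyinf
  have heF : ∀ n, F (e n) = y := fun n => Nat.nth_mem_of_infinite hyinf n
  -- compactness
  obtain ⟨xstar, hxstarS, σ, hσmono, hσtend⟩ :=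
    hS.tendsto_subseq (x := fun n => x (ψ (e n))) (fun n => hxS _)
  refine ⟨ψ ∘ e ∘ σ, hψmono.comp (hemono.comp hσmono), fun k => hψU _,
    xstar, hxstarS, hσtend, ?_, y.1, (y.2 : ℕ), ?_, ?_, ?_⟩
  · exact hdψ.comp ((hemono.comp hσmono).tendsto_atTop)
  · intro k
    have := heF (σ k)
    exact congrArg Prod.fst this
  · intro k
    have := congrArg Prod.snd (heF (σ k))
    exact congrArg Fin.val this
  · intro k
    have h1 := congrArg Prod.fst (heF (σ k))
    have h2 := congrArg Fin.val (congrArg Prod.snd (heF (σ k)))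
    simp only [Function.comp] at *
    exact congrArg₂ N h1 h2
end

section
/- Suppose f* : ℝⁿ → ℝ is Lipschitz continuous near u ∈ Λ, v ∈ T^H_Λ(u) is a hypertangent vector, and there exist sequences w_k → u with w_k ∈ Λ, t_k ↓ 0, and v_k → v such that w_k + t_k v_k ∈ Λ and f*(w_k + t_k v_k) ≥ f*(w_k) for all k. Then the Clarke generalized directional derivative restricted to Λ satisfies f*°(u; v) ≥ 0, where f*°(u; v) = limsup_{w→u, w∈Λ, t↓0, w+tv∈Λ} (f*(w+tv) − f*(w))/t. -/
open Filter

/-- If `f*` is Lipschitz near `u ∈ Λ`, `v` is a hypertangent vector to `Λ` at `u`, and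
there are sequences `w k → u` in `Λ`, `t k ↓ 0`, `v k → v` with `w k + t k • v k ∈ Λ`
and `f* (w k + t k • v k) ≥ f* (w k)`, then the Clarke generalized directional
derivative of `f*` at `u` in direction `v`, restricted to `Λ`, is nonnegative. -/
theorem clarke_derivative_nonneg_at_refined_point
    {n : ℕ} (Λ : Set (EuclideanSpace ℝ (Fin n)))
    (u : EuclideanSpace ℝ (Fin n)) (hu : u ∈ Λ)
    (f : EuclideanSpace ℝ (Fin n) → ℝ)
    (L : NNReal) (δ : ℝ) (hδ : 0 < δ) (hLip : LipschitzOnWith L f (Metric.ball u δ))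
    (v : EuclideanSpace ℝ (Fin n))
    (hv : ∃ ε > (0:ℝ), ∀ w ∈ Metric.ball u ε ∩ Λ,
      ∀ u' ∈ Metric.ball v ε, ∀ t ∈ Set.Ioo (0:ℝ) ε, w + t • u' ∈ Λ)
    (w : ℕ → EuclideanSpace ℝ (Fin n)) (t : ℕ → ℝ)
    (vs : ℕ → EuclideanSpace ℝ (Fin n))
    (hw : Tendsto w atTop (nhds u)) (hwΛ : ∀ k, w k ∈ Λ)
    (ht : Tendsto t atTop (nhds 0)) (htpos : ∀ k, 0 < t k)
    (hvs : Tendsto vs atTop (nhds v))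
    (hmem : ∀ k, w k + t k • vs k ∈ Λ)
    (hge : ∀ k, f (w k) ≤ f (w k + t k • vs k)) :
    0 ≤ Filter.limsup
      (fun p : EuclideanSpace ℝ (Fin n) × ℝ =>
        (f (p.1 + p.2 • v) - f p.1) / p.2)
      ((nhdsWithin u Λ ×ˢ nhdsWithin 0 (Set.Ioi 0)) ⊓
        Filter.principal {p : EuclideanSpace ℝ (Fin n) × ℝ | p.1 + p.2 • v ∈ Λ}) := by
  classical
  set F : Filter (EuclideanSpace ℝ (Fin n) × ℝ) :=
    ((nhdsWithin u Λ ×ˢ nhdsWithin 0 (Set.Ioi 0)) ⊓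
      Filter.principal {p : EuclideanSpace ℝ (Fin n) × ℝ | p.1 + p.2 • v ∈ Λ}) with hF
  set q : EuclideanSpace ℝ (Fin n) × ℝ → ℝ := fun p => (f (p.1 + p.2 • v) - f p.1) / p.2 with hq
  obtain ⟨ε, hε, hhyp⟩ := hv
  -- the sequence tends to the filter F
  have hwΛ' : Tendsto w atTop (nhdsWithin u Λ) :=
    tendsto_nhdsWithin_of_tendsto_nhds_of_eventually_within w hw
      (Eventually.of_forall hwΛ)
  have ht' : Tendsto t atTop (nhdsWithin 0 (Set.Ioi 0)) :=
    tendsto_nhdsWithin_of_tendsto_nhds_of_eventually_within t ht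
      (Eventually.of_forall htpos)
  have hball : ∀ᶠ k in atTop, w k ∈ Metric.ball u ε := hw (Metric.ball_mem_nhds u hε)
  have htsmall : ∀ᶠ k in atTop, t k < ε := by
    have := ht (Metric.ball_mem_nhds (0:ℝ) hε)
    filter_upwards [this] with k hk
    have : |t k| < ε := by simpa [Real.dist_eq] using hk
    exact lt_of_le_of_lt (le_abs_self _) this
  have hprin : ∀ᶠ k in atTop, w k + t k • v ∈ Λ := by
    filter_upwards [hball, htsmall] with k hk1 hk2
    exact hhyp (w k) ⟨hk1, hwΛ k⟩ v (Metric.mem_ball_self hε) (t k) ⟨htpos k, hk2⟩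
  have hmap : Tendsto (fun k => (w k, t k)) atTop F := by
    rw [hF]
    refine tendsto_inf.mpr ⟨Tendsto.prodMk hwΛ' ht', tendsto_principal.mpr ?_⟩
    filter_upwards [hprin] with k hk using hk
  haveI hFne : F.NeBot := neBot_of_le hmap
  -- boundedness above of q under F
  have hbdd : IsBoundedUnder (· ≤ ·) F q := by
    refine ⟨L * ‖v‖, ?_⟩
    rw [eventually_map]
    have h1 : ∀ᶠ x in nhdsWithin u Λ, x ∈ Metric.ball u (δ/2) :=
      nhdsWithin_le_nhds (Metric.ball_mem_nhds u (by linarith))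
    have hr : (0:ℝ) < δ / (2 * (‖v‖ + 1)) := by
      apply div_pos hδ
      positivity
    have h2 : ∀ᶠ s in nhdsWithin (0:ℝ) (Set.Ioi 0), s ∈ Set.Ioo 0 (δ / (2 * (‖v‖ + 1))) :=
      Ioo_mem_nhdsGT_of_mem ⟨le_refl _, hr⟩
    have h12 : ∀ᶠ p in (nhdsWithin u Λ ×ˢ nhdsWithin 0 (Set.Ioi 0)),
        p.1 ∈ Metric.ball u (δ/2) ∧ p.2 ∈ Set.Ioo 0 (δ / (2 * (‖v‖ + 1))) :=
      Eventually.prod_mk h1 h2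
    have hle : F ≤ (nhdsWithin u Λ ×ˢ nhdsWithin 0 (Set.Ioi 0)) := inf_le_left
    filter_upwards [hle h12] with p hp
    obtain ⟨hp1, hp2, hp3⟩ := hp
    have hvnorm : ‖p.2 • v‖ < δ / 2 := by
      rw [norm_smul, Real.norm_eq_abs, abs_of_pos hp2]
      calc p.2 * ‖v‖ ≤ p.2 * (‖v‖ + 1) := by nlinarith [norm_nonneg v, hp2.le]
        _ < (δ / (2 * (‖v‖ + 1))) * (‖v‖ + 1) := by
            apply mul_lt_mul_of_pos_right hp3
            positivity
        _ = δ / 2 := by field_simp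
    have hmem1 : p.1 ∈ Metric.ball u δ := Metric.ball_subset_ball (by linarith) hp1
    have hmem2 : p.1 + p.2 • v ∈ Metric.ball u δ := by
      rw [Metric.mem_ball] at hp1 ⊢
      calc dist (p.1 + p.2 • v) u ≤ dist (p.1 + p.2 • v) p.1 + dist p.1 u := dist_triangle _ _ _
        _ < δ/2 + δ/2 := by
            apply add_lt_add _ hp1
            simpa [dist_eq_norm] using hvnorm
        _ = δ := by ring
    have hd := hLip.dist_le_mul _ hmem2 _ hmem1
    have hdd : dist (p.1 + p.2 • v) p.1 = p.2 * ‖v‖ := by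
      rw [dist_eq_norm]
      simp [norm_smul, abs_of_pos hp2]
    rw [hdd] at hd
    have : f (p.1 + p.2 • v) - f p.1 ≤ L * (p.2 * ‖v‖) := by
      calc f (p.1 + p.2 • v) - f p.1 ≤ |f (p.1 + p.2 • v) - f p.1| := le_abs_self _
        _ = dist (f (p.1 + p.2 • v)) (f p.1) := (Real.dist_eq _ _).symm
        _ ≤ L * (p.2 * ‖v‖) := hd
    rw [hq]
    simp only
    rw [div_le_iff₀ hp2]
    calc f (p.1 + p.2 • v) - f p.1 ≤ L * (p.2 * ‖v‖) := this
      _ = (L : ℝ) * ‖v‖ * p.2 := by ring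
  -- for every ε' > 0, -ε' ≤ limsup
  have key : ∀ ε' > (0:ℝ), -ε' ≤ Filter.limsup q F := by
    intro ε' hε'
    apply le_limsup_of_frequently_le _ hbdd
    apply hmap.frequently
    apply Eventually.frequently
    -- eventually along atTop: q (w k, t k) ≥ -ε'
    -- both points in the Lipschitz ball
    have hbk : Tendsto (fun k => w k + t k • vs k) atTop (nhds u) := by
      have : Tendsto (fun k => t k • vs k) atTop (nhds ((0:ℝ) • v)) := ht.smul hvs
      rw [zero_smul] at this
      simpa using hw.add this
    have hak : Tendsto (fun k => w k + t k • v) atTop (nhds u) := by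
      have : Tendsto (fun k => t k • v) atTop (nhds ((0:ℝ) • v)) := ht.smul tendsto_const_nhds
      rw [zero_smul] at this
      simpa using hw.add this
    have hWball : ∀ᶠ k in atTop, w k ∈ Metric.ball u δ := hw (Metric.ball_mem_nhds u hδ)
    have hAball : ∀ᶠ k in atTop, w k + t k • v ∈ Metric.ball u δ := hak (Metric.ball_mem_nhds u hδ)
    have hBball : ∀ᶠ k in atTop, w k + t k • vs k ∈ Metric.ball u δ := hbk (Metric.ball_mem_nhds u hδ)
    have hvsclose : ∀ᶠ k in atTop, (L:ℝ) * ‖v - vs k‖ ≤ ε' := by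
      have hnorm : Tendsto (fun k => (L:ℝ) * ‖v - vs k‖) atTop (nhds 0) := by
        have : Tendsto (fun k => v - vs k) atTop (nhds (v - v)) := tendsto_const_nhds.sub hvs
        rw [sub_self] at this
        have hn := this.norm
        rw [norm_zero] at hn
        simpa using hn.const_mul (L:ℝ)
      have := hnorm (Metric.ball_mem_nhds (0:ℝ) hε')
      filter_upwards [this] with k hk
      have : (L:ℝ) * ‖v - vs k‖ < ε' := by simpa [Real.dist_eq] using hk
      exact this.le
    filter_upwards [hWball, hAball, hBball, hvsclose] with k hW hA hB hclose
    have hd := hLip.dist_le_mul _ hA _ hB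
    have hdd : dist (w k + t k • v) (w k + t k • vs k) = t k * ‖v - vs k‖ := by
      rw [dist_eq_norm]
      have : (w k + t k • v) - (w k + t k • vs k) = t k • (v - vs k) := by
        rw [smul_sub]; abel
      rw [this, norm_smul, Real.norm_eq_abs, abs_of_pos (htpos k)]
    rw [hdd] at hd
    have h1 : f (w k + t k • vs k) - f (w k + t k • v) ≤ (L:ℝ) * (t k * ‖v - vs k‖) := by
      calc f (w k + t k • vs k) - f (w k + t k • v)
          ≤ |f (w k + t k • v) - f (w k + t k • vs k)| := by
            rw [abs_sub_comm]; exact le_abs_self _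
        _ = dist (f (w k + t k • v)) (f (w k + t k • vs k)) := (Real.dist_eq _ _).symm
        _ ≤ (L:ℝ) * (t k * ‖v - vs k‖) := hd
    have h2 : f (w k) ≤ f (w k + t k • vs k) := hge k
    show -ε' ≤ q (w k, t k)
    rw [hq]
    simp only
    rw [le_div_iff₀ (htpos k)]
    have : (L:ℝ) * ‖v - vs k‖ * t k ≤ ε' * t k :=
      mul_le_mul_of_nonneg_right hclose (htpos k).le
    nlinarith [htpos k]
  by_contra hneg
  push_neg at hneg
  have := key (-(Filter.limsup q F) / 2) (by linarith)
  linarith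
end
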